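/- arXiv:1805.02911 — 2 statements merged into one kernel-verified Lean document; each statement's English description precedes it below -/
import Mathlib

section
/- Let G be an abelian group and g ∈ G an element of infinite order. The zero-sum sequence W = (−g)^2 · (−4g)^2 · (2g)^2 · (3g)^2 has exactly three factorizations into atoms: ((−g)(−4g)(2g)(3g))^2, ((−g)^2(2g)) · ((−4g)^2(2g)(3g)^2), and ((−4g)(2g)^2) · ((−g)^2(−4g)(3g)^2); and its catenary degree is c(W) = 2. -/
/-- A minimal zero-sum sequence over the abelian group `G`: a nonempty zero-sum
multiset none of whose proper nonempty sub-multisets has sum zero. -/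
def IsMinZeroSum {G : Type*} [AddCommGroup G] (S : Multiset G) : Prop :=
  S ≠ 0 ∧ S.sum = 0 ∧ ∀ T ≤ S, T ≠ 0 → T.sum = 0 → T = S

/-- A factorization of a zero-sum sequence `B` into atoms of `B(G)`. -/
def IsFactorization {G : Type*} [AddCommGroup G] (B : Multiset G)
    (z : Multiset (Multiset G)) : Prop :=
  (∀ A ∈ z, IsMinZeroSum A) ∧ z.sum = B

/-- The usual distance between two factorizations. -/
noncomputable def factDist {G : Type*} [AddCommGroup G] (z z' : Multiset (Multiset G)) : ℕ :=
  letI := Classical.decEq (Multiset G)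
  max (z - z').card (z' - z).card

/-- The catenary degree of `B ∈ B(G)`: the least `N` such that any two factorizations
of `B` can be concatenated by a chain of factorizations with consecutive distances `≤ N`. -/
noncomputable def catenaryDeg {G : Type*} [AddCommGroup G] (B : Multiset G) : ℕ :=
  sInf {N : ℕ | ∀ z z', IsFactorization B z → IsFactorization B z' →
    Relation.ReflTransGen (fun x y => IsFactorization B y ∧ factDist x y ≤ N) z z'}

/-- The tame degree `t(A, U)` of `A ∈ B(G)` with respect to the atom `U`. -/
noncomputable def tameDeg {G : Type*} [AddCommGroup G] (A U : Multiset G) : ℕ :=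
  sInf {N : ℕ | ∀ z, IsFactorization A z →
    (∃ z', IsFactorization A z' ∧ U ∈ z') →
    ∃ z', IsFactorization A z' ∧ U ∈ z' ∧ factDist z z' ≤ N}

/-- The set of (positive) tame degrees of `B(G)`. -/
noncomputable def TaSet (G : Type*) [AddCommGroup G] : Set ℕ :=
  {n | 0 < n ∧ ∃ A U : Multiset G, A.sum = 0 ∧ IsMinZeroSum U ∧ tameDeg A U = n}

/-- The Davenport constant of `G`: the supremum of lengths of minimal zero-sum sequences. -/
noncomputable def davenport (G : Type*) [AddCommGroup G] : ℕ :=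
  sSup {n : ℕ | ∃ A : Multiset G, IsMinZeroSum A ∧ A.card = n}

/-! Since `g` has infinite order, `n ↦ n • g` embeds `ℤ` into `G`. An injective homomorphism
preserves minimal zero-sum sequences, factorizations and distances between factorizations, so
everything can be computed in `ℤ`, for `W = (-1)²(-4)²2²3²`. There the atoms dividing `W` are
`(-1)²2, (-4)2², (-1)(-4)2·3, (-1)²(-4)3², (-4)²2·3²`, all of length at least `3`; hence a
factorization of `W` (of length `8`) consists of two complementary atoms, which gives the three
factorizations. All three have length `2`, so any two are at distance at most `2`, while the first
is at distance `2` from the other two; hence `c(W) = 2`. -/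

open Multiset

theorem Multiset.exists_map_eq_of_forall_mem_range {α β : Type*} {f : α → β} {s : Multiset β}
    (h : ∀ x ∈ s, ∃ a, f a = x) : ∃ t : Multiset α, t.map f = s := by
  choose g hg using h
  exact ⟨s.attach.map fun x => g x.1 x.2, by simp [Multiset.map_map, hg]⟩

theorem Multiset.exists_le_map_eq_of_le_map {α β : Type*} {f : α → β}
    (hf : Function.Injective f) {s : Multiset α} {T : Multiset β} (hT : T ≤ s.map f) :
    ∃ t ≤ s, t.map f = T := by
  obtain ⟨t, rfl⟩ := exists_map_eq_of_forall_mem_range fun x hx =>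
    (mem_map.1 (mem_of_le hT hx)).imp fun _ => And.right
  exact ⟨t, (map_le_map_iff hf).1 hT, rfl⟩

theorem Multiset.card_map_tsub_map_le {α β : Type*} [DecidableEq α] [DecidableEq β]
    (f : α → β) (s t : Multiset α) : card (s.map f - t.map f) ≤ card (s - t) := by
  have : s.map f ≤ (s - t).map f + t.map f := by
    rw [← map_add]; exact map_le_map le_tsub_add
  simpa using card_le_card (tsub_le_iff_right.2 this)

section ZeroSumSequences

variable {H G : Type*} [AddCommGroup H] [AddCommGroup G]

theorem isMinZeroSum_iff_forall_mem_powerset {S : Multiset G} :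
    IsMinZeroSum S ↔ S ≠ 0 ∧ S.sum = 0 ∧ ∀ T ∈ S.powerset, T ≠ 0 → T.sum = 0 → T = S := by
  simp only [IsMinZeroSum, mem_powerset]

instance [DecidableEq G] : DecidablePred (IsMinZeroSum : Multiset G → Prop) :=
  fun _ => decidable_of_iff' _ isMinZeroSum_iff_forall_mem_powerset

instance [DecidableEq G] {B : Multiset G} : DecidablePred (IsFactorization B) :=
  fun _ => inferInstanceAs (Decidable (_ ∧ _))

theorem IsFactorization.le_of_mem {B A : Multiset G} {z : Multiset (Multiset G)}
    (hz : IsFactorization B z) (hA : A ∈ z) : A ≤ B :=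
  hz.2 ▸ le_sum_of_mem hA

theorem IsFactorization.mul_card_le {B : Multiset G} {z : Multiset (Multiset G)} {n : ℕ}
    (hz : IsFactorization B z) (h : ∀ A ∈ z, n ≤ card A) : n * card z ≤ card B := by
  rw [← hz.2, ← join, card_join, mul_comm, ← smul_eq_mul, ← card_map card z]
  exact card_nsmul_le_sum fun m hm => by
    obtain ⟨A, hA, rfl⟩ := mem_map.1 hm
    exact h A hA

theorem IsFactorization.card_le {B : Multiset G} {z : Multiset (Multiset G)}
    (hz : IsFactorization B z) : card z ≤ card B := by
  simpa using hz.mul_card_le fun A hA => card_pos.2 (hz.1 A hA).1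

theorem factDist_eq [DecidableEq (Multiset G)] (z z' : Multiset (Multiset G)) :
    factDist z z' = max (card (z - z')) (card (z' - z)) := by
  unfold factDist
  congr!

theorem factDist_le_max_card (z z' : Multiset (Multiset G)) :
    factDist z z' ≤ max (card z) (card z') := by
  classical
  rw [factDist_eq]
  exact max_le_max (card_le_card tsub_le_self) (card_le_card tsub_le_self)

theorem factDist_map_le (F : Multiset H → Multiset G) (z z' : Multiset (Multiset H)) :
    factDist (z.map F) (z'.map F) ≤ factDist z z' := by
  classical
  simp only [factDist_eq]
  exact max_le_max (card_map_tsub_map_le F z z') (card_map_tsub_map_le F z' z)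

def IsCatenaryBound (B : Multiset G) (N : ℕ) : Prop :=
  ∀ z z', IsFactorization B z → IsFactorization B z' →
    Relation.ReflTransGen (fun x y => IsFactorization B y ∧ factDist x y ≤ N) z z'

theorem catenaryDeg_eq_sInf (B : Multiset G) :
    catenaryDeg B = sInf {N | IsCatenaryBound B N} :=
  rfl

theorem isCatenaryBound_of_forall_card_le {B : Multiset G} {N : ℕ}
    (h : ∀ z, IsFactorization B z → card z ≤ N) : IsCatenaryBound B N :=
  fun z z' hz hz' =>
    .single ⟨hz', (factDist_le_max_card z z').trans (max_le (h z hz) (h z' hz'))⟩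

theorem IsCatenaryBound.le_of_isolated {B : Multiset G} {N n : ℕ}
    {z z' : Multiset (Multiset G)} (hN : IsCatenaryBound B N) (hz : IsFactorization B z)
    (hz' : IsFactorization B z') (hne : z ≠ z')
    (hsep : ∀ y, IsFactorization B y → y ≠ z → n ≤ factDist z y) : n ≤ N := by
  by_contra! hlt
  have hstuck (y : Multiset (Multiset G))
      (hy : Relation.ReflTransGen (fun x y => IsFactorization B y ∧ factDist x y ≤ N) z y) :
      y = z := by
    induction hy with
    | refl => rfl
    | tail _ hstep ih =>
      subst ih
      by_contra hy
      exact hlt.not_ge ((hsep _ hstep.1 hy).trans hstep.2)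
  exact hne (hstuck z' (hN z z' hz hz')).symm

theorem catenaryDeg_eq_of_isolated {B : Multiset G} {n : ℕ} {z z' : Multiset (Multiset G)}
    (hcard : ∀ y, IsFactorization B y → card y ≤ n) (hz : IsFactorization B z)
    (hz' : IsFactorization B z') (hne : z ≠ z')
    (hsep : ∀ y, IsFactorization B y → y ≠ z → n ≤ factDist z y) : catenaryDeg B = n :=
  le_antisymm (Nat.sInf_le (isCatenaryBound_of_forall_card_le hcard))
    (le_csInf ⟨_, isCatenaryBound_of_forall_card_le fun _ => IsFactorization.card_le⟩
      fun _ (hN : IsCatenaryBound B _) => hN.le_of_isolated hz hz' hne hsep)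

theorem isMinZeroSum_map_iff {f : H →+ G} (hf : Function.Injective f) {S : Multiset H} :
    IsMinZeroSum (S.map f) ↔ IsMinZeroSum S := by
  have hsum (T : Multiset H) : (T.map f).sum = 0 ↔ T.sum = 0 := by
    rw [← map_multiset_sum, map_eq_zero_iff f hf]
  simp only [IsMinZeroSum, ne_eq, map_eq_zero, hsum]
  refine and_congr_right fun _ => and_congr_right fun _ => ⟨fun h T hT => ?_, fun h T hT => ?_⟩
  · simpa [hsum, (map_injective hf).eq_iff] using h (T.map f) (map_le_map hT)
  · obtain ⟨t, ht, rfl⟩ := exists_le_map_eq_of_le_map hf hT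
    simpa [hsum, (map_injective hf).eq_iff] using h t ht

theorem isFactorization_map_iff {f : H →+ G} (hf : Function.Injective f) {B : Multiset H}
    {z : Multiset (Multiset G)} :
    IsFactorization (B.map f) z ↔ ∃ ζ, IsFactorization B ζ ∧ ζ.map (map f) = z := by
  have hsum (ζ : Multiset (Multiset H)) : (ζ.map (map f)).sum = ζ.sum.map f :=
    (map_multiset_sum (mapAddMonoidHom f) ζ).symm
  constructor
  · intro hz
    obtain ⟨ζ, rfl⟩ := exists_map_eq_of_forall_mem_range fun A hA =>
      (exists_le_map_eq_of_le_map hf (hz.le_of_mem hA)).imp fun _ => And.right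
    refine ⟨ζ, ⟨fun a ha => ?_, map_injective hf ?_⟩, rfl⟩
    · exact (isMinZeroSum_map_iff hf).1 (hz.1 _ (mem_map_of_mem _ ha))
    · rw [← hsum, hz.2]
  · rintro ⟨ζ, ⟨hatoms, hsumζ⟩, rfl⟩
    refine ⟨fun A hA => ?_, by rw [hsum, hsumζ]⟩
    obtain ⟨a, ha, rfl⟩ := mem_map.1 hA
    exact (isMinZeroSum_map_iff hf).2 (hatoms a ha)

theorem isCatenaryBound_map_iff {f : H →+ G} (hf : Function.Injective f) {B : Multiset H}
    {N : ℕ} :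
    IsCatenaryBound (B.map f) N ↔ IsCatenaryBound B N := by
  constructor
  · intro hN ζ ζ' hζ hζ'
    obtain ⟨g, hg⟩ := hf.hasLeftInverse
    have hinv (η : Multiset (Multiset H)) : (η.map (map f)).map (map g) = η := by
      simp [map_map, hg _]
    have hchain := hN _ _ ((isFactorization_map_iff hf).2 ⟨ζ, hζ, rfl⟩)
      ((isFactorization_map_iff hf).2 ⟨ζ', hζ', rfl⟩)
    rw [← hinv ζ, ← hinv ζ']
    refine Relation.ReflTransGen.lift _ (fun x y hxy => ?_) _ _ hchain
    obtain ⟨η, hη, rfl⟩ := (isFactorization_map_iff hf).1 hxy.1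
    exact ⟨(hinv η).symm ▸ hη, (factDist_map_le _ x _).trans hxy.2⟩
  · intro hN z z' hz hz'
    obtain ⟨ζ, hζ, rfl⟩ := (isFactorization_map_iff hf).1 hz
    obtain ⟨ζ', hζ', rfl⟩ := (isFactorization_map_iff hf).1 hz'
    refine Relation.ReflTransGen.lift _ (fun x y hxy => ?_) _ _ (hN ζ ζ' hζ hζ')
    exact ⟨(isFactorization_map_iff hf).2 ⟨y, hxy.1, rfl⟩, (factDist_map_le _ x y).trans hxy.2⟩

theorem catenaryDeg_map {f : H →+ G} (hf : Function.Injective f) (B : Multiset H) :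
    catenaryDeg (B.map f) = catenaryDeg B := by
  simp only [catenaryDeg_eq_sInf, isCatenaryBound_map_iff hf]

end ZeroSumSequences

def intW : Multiset ℤ := replicate 2 (-1) + replicate 2 (-4) + replicate 2 2 + replicate 2 3

set_option maxRecDepth 2000 in
theorem eq_of_isMinZeroSum_of_le_intW {A : Multiset ℤ} (hA : IsMinZeroSum A) (hle : A ≤ intW) :
    A = {-1, -1, 2} ∨ A = {-4, 2, 2} ∨ A = {-1, -4, 2, 3} ∨ A = {-1, -1, -4, 3, 3} ∨
      A = {-4, -4, 2, 3, 3} := by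
  have key : ∀ A ∈ intW.powerset, IsMinZeroSum A →
      A = {-1, -1, 2} ∨ A = {-4, 2, 2} ∨ A = {-1, -4, 2, 3} ∨ A = {-1, -1, -4, 3, 3} ∨
        A = {-4, -4, 2, 3, 3} := by
    decide
  exact key A (mem_powerset.2 hle) hA

theorem isFactorization_intW_iff {z : Multiset (Multiset ℤ)} :
    IsFactorization intW z ↔ z = replicate 2 {-1, -4, 2, 3} ∨
      z = {{-1, -1, 2}, {-4, -4, 2, 3, 3}} ∨ z = {{-4, 2, 2}, {-1, -1, -4, 3, 3}} := by
  refine ⟨fun hz => ?_, by rintro (rfl | rfl | rfl) <;> decide⟩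
  have hatom (A : Multiset ℤ) (hA : A ∈ z) :=
    eq_of_isMinZeroSum_of_le_intW (hz.1 A hA) (hz.le_of_mem hA)
  have hcard : 3 * card z ≤ card intW := hz.mul_card_le fun A hA => by
    rcases hatom A hA with rfl | rfl | rfl | rfl | rfl <;> decide
  have hsum := hz.2
  rcases hcard_z : card z with _ | _ | _ | n
  · rw [card_eq_zero.1 hcard_z] at hsum
    exact absurd hsum (by decide)
  · obtain ⟨A, rfl⟩ := card_eq_one.1 hcard_z
    rcases hatom A (mem_singleton_self A) with rfl | rfl | rfl | rfl | rfl <;>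
      revert hsum <;> decide
  · obtain ⟨A, A', rfl⟩ := card_eq_two.1 hcard_z
    rcases hatom A (by simp) with rfl | rfl | rfl | rfl | rfl <;>
      rcases hatom A' (by simp) with rfl | rfl | rfl | rfl | rfl <;> revert hsum <;> decide
  · rw [hcard_z, show card intW = 8 from rfl] at hcard
    omega

theorem catenaryDeg_intW : catenaryDeg intW = 2 := by
  refine catenaryDeg_eq_of_isolated (z := replicate 2 {-1, -4, 2, 3})
    (z' := {{-1, -1, 2}, {-4, -4, 2, 3, 3}}) (fun y hy => ?_)
    (isFactorization_intW_iff.2 (.inl rfl)) (isFactorization_intW_iff.2 (.inr (.inl rfl)))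
    (by decide) (fun y hy hne => ?_)
  · rcases isFactorization_intW_iff.1 hy with rfl | rfl | rfl <;> decide
  · rw [factDist_eq]
    rcases isFactorization_intW_iff.1 hy with rfl | rfl | rfl
    · exact absurd rfl hne
    all_goals decide

theorem stmt8 (G : Type*) [AddCommGroup G] (g : G) (hg : addOrderOf g = 0) :
    (∀ z, IsFactorization
        (Multiset.replicate 2 (-g) + Multiset.replicate 2 (-(4 • g)) +
          Multiset.replicate 2 (2 • g) + Multiset.replicate 2 (3 • g)) z ↔
      z = Multiset.replicate 2 ({-g, -(4 • g), 2 • g, 3 • g} : Multiset G) ∨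
      z = ({({-g, -g, 2 • g} : Multiset G),
            ({-(4 • g), -(4 • g), 2 • g, 3 • g, 3 • g} : Multiset G)} :
              Multiset (Multiset G)) ∨
      z = ({({-(4 • g), 2 • g, 2 • g} : Multiset G),
            ({-g, -g, -(4 • g), 3 • g, 3 • g} : Multiset G)} :
              Multiset (Multiset G))) ∧
    catenaryDeg
      (Multiset.replicate 2 (-g) + Multiset.replicate 2 (-(4 • g)) +
        Multiset.replicate 2 (2 • g) + Multiset.replicate 2 (3 • g)) = 2 := by
  set φ := zmultiplesHom G g
  have hinj : Function.Injective φ :=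
    injective_zsmul_iff_not_isOfFinAddOrder.2 (addOrderOf_eq_zero_iff.1 hg)
  have hφ₁ : φ (-1) = -g := by rw [zmultiplesHom_apply, neg_zsmul, one_zsmul]
  have hφ₂ : φ 2 = 2 • g := by rw [zmultiplesHom_apply, ofNat_zsmul]
  have hφ₃ : φ 3 = 3 • g := by rw [zmultiplesHom_apply, ofNat_zsmul]
  have hφ₄ : φ (-4) = -(4 • g) := by rw [zmultiplesHom_apply, neg_zsmul, ofNat_zsmul]
  have hW : intW.map φ = replicate 2 (-g) + replicate 2 (-(4 • g)) +
      replicate 2 (2 • g) + replicate 2 (3 • g) := by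
    simp only [intW, Multiset.map_add, map_replicate, hφ₁, hφ₂, hφ₃, hφ₄]
  rw [← hW, catenaryDeg_map hinj, catenaryDeg_intW]
  refine ⟨fun z => ?_, rfl⟩
  simp only [isFactorization_map_iff hinj, isFactorization_intW_iff, or_and_right, exists_or,
    exists_eq_left, map_replicate, insert_eq_cons, map_cons, map_singleton, hφ₁, hφ₂, hφ₃, hφ₄,
    eq_comm]
end

section
/- Let G be an abelian group containing an element g of order n ≥ 4. Set U = g^n and V = (−2g)·(2g) in B(G). Then U·V has exactly the two factorizations U·V and (g^{n−2}·(2g))·((−2g)·g^2), and consequently t(U·V, U) = 2. -/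
/-!
Write `B = g^n (-2g) (2g)`. An atom dividing `B` that contains `2g` either contains `-2g`, and then
it is `(-2g)(2g)` by minimality, or it is `g^k (2g)` with `n ∣ k + 2`, i.e. `g^(n-2) (2g)`.
Removing that atom from a factorization of `B` leaves a factorization of `g^n` resp. `g^2 (-2g)`,
which are atoms and so factor only trivially. For `n ≥ 4` the two factorizations share no atom
(their atoms have lengths `n, 2` and `n - 1, 3`), so `t(B, g^n)` is their distance `2`.
-/

open Multiset

section Factorization

variable {G : Type*} [AddCommGroup G]

lemma IsFactorization.pair {A C : Multiset G} (hA : IsMinZeroSum A) (hC : IsMinZeroSum C) :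
    IsFactorization (A + C) {A, C} := by
  refine ⟨fun D hD => ?_, by simp⟩
  rcases mem_cons.1 hD with rfl | hD
  · exact hA
  · rwa [mem_singleton.1 hD]

lemma IsFactorization.of_cons {A B : Multiset G} {z : Multiset (Multiset G)}
    (h : IsFactorization (A + B) (A ::ₘ z)) : IsFactorization B z :=
  ⟨fun D hD => h.1 D (mem_cons_of_mem hD), add_left_cancel (by rw [← sum_cons, h.2])⟩

lemma IsFactorization.eq_singleton {A : Multiset G} (hA : IsMinZeroSum A)
    {z : Multiset (Multiset G)} (h : IsFactorization A z) : z = {A} := by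
  obtain ⟨C, hC⟩ := exists_mem_of_ne_zero fun hz : z = 0 => hA.1 (by rw [← h.2, hz, sum_zero])
  have hCA : C = A := hA.2.2 C (h.2 ▸ le_sum_of_mem hC) (h.1 C hC).1 (h.1 C hC).2.1
  subst hCA
  obtain ⟨t, rfl⟩ := exists_cons_of_mem hC
  have ht : IsFactorization 0 t := IsFactorization.of_cons (by rwa [add_zero])
  obtain rfl : t = 0 := eq_zero_of_forall_notMem fun D hD =>
    (ht.1 D hD).1 (sum_eq_zero_iff.1 ht.2 D hD)
  rfl

lemma factDist_self (z : Multiset (Multiset G)) : factDist z z = 0 := by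
  simp [factDist]

lemma factDist_of_disjoint {z z' : Multiset (Multiset G)} (h : Disjoint z z') :
    factDist z z' = max (card z) (card z') := by
  let := Classical.decEq (Multiset G)
  have sub_of_disjoint : ∀ {s t : Multiset (Multiset G)}, Disjoint s t → s - t = s :=
    fun {s t} hst => by simpa [inter_eq_zero_iff_disjoint.2 hst] using sub_add_inter s t
  simp only [factDist, sub_of_disjoint h, sub_of_disjoint h.symm]

lemma tameDeg_eq_factDist_of_forall_isFactorization_iff {A U : Multiset G}
    {z₁ z₂ : Multiset (Multiset G)} (h : ∀ z, IsFactorization A z ↔ z = z₁ ∨ z = z₂)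
    (hU₁ : U ∈ z₁) (hU₂ : U ∉ z₂) : tameDeg A U = factDist z₂ z₁ := by
  have hz₁ : IsFactorization A z₁ := (h z₁).2 (Or.inl rfl)
  refine IsLeast.csInf_eq ⟨fun z hz _ => ?_, fun N hN => ?_⟩
  · rcases (h z).1 hz with rfl | rfl
    · exact ⟨z, hz, hU₁, by rw [factDist_self]; exact Nat.zero_le _⟩
    · exact ⟨z₁, hz₁, hU₁, le_rfl⟩
  · obtain ⟨z', hz', hUz', hdist⟩ := hN z₂ ((h z₂).2 (Or.inr rfl)) ⟨z₁, hz₁, hU₁⟩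
    rcases (h z').1 hz' with rfl | rfl
    · exact hdist
    · exact absurd hUz' hU₂

end Factorization

section Cyclic

variable {G : Type*} [AddCommGroup G] {g : G}

lemma isMinZeroSum_replicate_add_singleton {k : ℕ} {a : G} (hsum : k • g + a = 0)
    (hk : ∀ j, 0 < j → j ≤ k → j • g ≠ 0) : IsMinZeroSum (replicate k g + {a}) := by
  rw [add_comm, singleton_add]
  refine ⟨cons_ne_zero, by simpa [add_comm] using hsum, fun T hT hT0 hTsum => ?_⟩
  by_cases ha : a ∈ T
  · obtain ⟨T', rfl⟩ := exists_cons_of_mem ha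
    obtain ⟨j, hj, rfl⟩ := le_replicate_iff.1 ((cons_le_cons_iff a).1 hT)
    have hkj : (k - j) • g = 0 := by
      simp only [sum_cons, sum_replicate] at hTsum
      rw [sub_nsmul g hj, add_neg_eq_zero]
      exact add_right_cancel (hsum.trans (hTsum.symm.trans (add_comm _ _)))
    rw [show j = k by by_contra hjk; exact hk (k - j) (by omega) (by omega) hkj]
  · obtain ⟨j, hj, rfl⟩ := le_replicate_iff.1 ((le_cons_of_notMem ha).1 hT)
    have hj0 : 0 < j := Nat.pos_of_ne_zero fun h => hT0 (by simp [h])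
    exact absurd (by simpa using hTsum) (hk j hj0 hj)

lemma isMinZeroSum_replicate_addOrderOf (hg : 0 < addOrderOf g) :
    IsMinZeroSum (replicate (addOrderOf g) g) := by
  have hsum : (addOrderOf g - 1) • g + g = 0 := by
    rw [← succ_nsmul, Nat.sub_add_cancel hg, addOrderOf_nsmul_eq_zero]
  have := isMinZeroSum_replicate_add_singleton hsum fun j hj hjn =>
    nsmul_ne_zero_of_lt_addOrderOf hj.ne' (by omega)
  rwa [← replicate_one, ← replicate_add, Nat.sub_add_cancel hg] at this

lemma isMinZeroSum_neg_pair {a : G} (ha : a ≠ 0) : IsMinZeroSum ({-a, a} : Multiset G) := by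
  have := isMinZeroSum_replicate_add_singleton (g := -a) (k := 1) (a := a) (by simp)
    fun j hj hj1 => by rw [show j = 1 by omega, one_nsmul]; exact neg_ne_zero.2 ha
  simpa using this

lemma isMinZeroSum_replicate_sub_two_add (hg : 2 < addOrderOf g) :
    IsMinZeroSum (replicate (addOrderOf g - 2) g + {2 • g}) :=
  isMinZeroSum_replicate_add_singleton
    (by rw [← add_nsmul, Nat.sub_add_cancel hg.le, addOrderOf_nsmul_eq_zero])
    fun j hj hjn => nsmul_ne_zero_of_lt_addOrderOf hj.ne' (by omega)

lemma isMinZeroSum_replicate_two_add_neg (hg : 2 < addOrderOf g) :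
    IsMinZeroSum (replicate 2 g + {-(2 • g)}) :=
  isMinZeroSum_replicate_add_singleton (add_neg_cancel _)
    fun j hj hj2 => nsmul_ne_zero_of_lt_addOrderOf hj.ne' (by omega)

lemma eq_neg_pair_or_eq_of_two_nsmul_mem (hg : 2 < addOrderOf g) {A : Multiset G}
    (hA : IsMinZeroSum A) (hle : A ≤ replicate (addOrderOf g) g + {-(2 • g), 2 • g})
    (hmem : 2 • g ∈ A) :
    A = {-(2 • g), 2 • g} ∨ A = replicate (addOrderOf g - 2) g + {2 • g} := by
  obtain ⟨A', rfl⟩ := exists_cons_of_mem hmem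
  rw [add_comm, insert_eq_cons, cons_add, singleton_add, cons_swap,
    cons_le_cons_iff] at hle
  by_cases hneg : -(2 • g) ∈ A'
  · obtain ⟨A'', rfl⟩ := exists_cons_of_mem hneg
    refine Or.inl (hA.2.2 _ ?_ (by simp) (by simp)).symm
    rw [cons_swap, insert_eq_cons]
    exact (cons_le_cons_iff _).2 ((cons_le_cons_iff _).2 (zero_le _))
  · obtain ⟨k, hk, rfl⟩ := le_replicate_iff.1 ((le_cons_of_notMem hneg).1 hle)
    have hdvd : addOrderOf g ∣ k + 2 := by
      rw [addOrderOf_dvd_iff_nsmul_eq_zero, add_nsmul, add_comm]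
      simpa using hA.2.1
    have hk2 : k + 2 = addOrderOf g := Nat.eq_of_dvd_of_lt_two_mul (by omega) hdvd (by omega)
    right
    rw [add_comm, singleton_add, show addOrderOf g - 2 = k by omega]

lemma isFactorization_replicate_add_neg_pair_iff (hg : 2 < addOrderOf g)
    {z : Multiset (Multiset G)} :
    IsFactorization (replicate (addOrderOf g) g + {-(2 • g), 2 • g}) z ↔
      z = {replicate (addOrderOf g) g, {-(2 • g), 2 • g}} ∨
      z = {replicate (addOrderOf g - 2) g + {2 • g}, replicate 2 g + {-(2 • g)}} := by
  have hU := isMinZeroSum_replicate_addOrderOf (g := g) (by omega)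
  have hV := isMinZeroSum_neg_pair (nsmul_ne_zero_of_lt_addOrderOf two_ne_zero hg)
  have hsplit : replicate (addOrderOf g) g + {-(2 • g), 2 • g} =
      (replicate (addOrderOf g - 2) g + {2 • g}) + (replicate 2 g + {-(2 • g)}) := by
    rw [add_add_add_comm, ← replicate_add, Nat.sub_add_cancel hg.le, singleton_add]
    exact congrArg _ (cons_swap _ _ _)
  constructor
  · intro hz
    have hsum : 2 • g ∈ z.sum := by rw [hz.2]; simp
    obtain ⟨A, hAz, hmem⟩ := mem_join.1 hsum
    rcases eq_neg_pair_or_eq_of_two_nsmul_mem hg (hz.1 A hAz) (hz.2 ▸ le_sum_of_mem hAz) hmem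
      with rfl | rfl
    · obtain ⟨t, rfl⟩ := exists_cons_of_mem hAz
      rw [add_comm] at hz
      rw [hz.of_cons.eq_singleton hU]
      exact Or.inl (cons_swap _ _ _)
    · obtain ⟨t, rfl⟩ := exists_cons_of_mem hAz
      rw [hsplit] at hz
      rw [hz.of_cons.eq_singleton (isMinZeroSum_replicate_two_add_neg hg)]
      exact Or.inr rfl
  · rintro (rfl | rfl)
    · exact IsFactorization.pair hU hV
    · rw [hsplit]
      exact IsFactorization.pair (isMinZeroSum_replicate_sub_two_add hg)
        (isMinZeroSum_replicate_two_add_neg hg)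

end Cyclic

theorem stmt12 (G : Type*) [AddCommGroup G] (g : G) (n : ℕ) (hn : 4 ≤ n)
    (ho : addOrderOf g = n) :
    (∀ z, IsFactorization (Multiset.replicate n g + {-(2 • g), 2 • g}) z ↔
      z = ({Multiset.replicate n g, ({-(2 • g), 2 • g} : Multiset G)} :
            Multiset (Multiset G)) ∨
      z = ({Multiset.replicate (n - 2) g + {2 • g},
            Multiset.replicate 2 g + {-(2 • g)}} : Multiset (Multiset G))) ∧
    tameDeg (Multiset.replicate n g + {-(2 • g), 2 • g})
      (Multiset.replicate n g) = 2 := by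
  subst ho
  have hfact := fun z => isFactorization_replicate_add_neg_pair_iff (g := g) (z := z) (by omega)
  have hcard : ∀ A ∈ ({replicate (addOrderOf g - 2) g + {2 • g}, replicate 2 g + {-(2 • g)}} :
      Multiset (Multiset G)), ∀ B ∈ ({replicate (addOrderOf g) g, {-(2 • g), 2 • g}} :
      Multiset (Multiset G)), card A ≠ card B := by
    simp only [insert_eq_cons, forall_mem_cons, mem_singleton, forall_eq, card_add,
      card_replicate, card_singleton, card_cons]
    omega
  refine ⟨hfact, ?_⟩
  rw [tameDeg_eq_factDist_of_forall_isFactorization_iff hfact (mem_cons_self _ _)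
      fun hU => hcard _ hU _ (mem_cons_self _ _) rfl,
    factDist_of_disjoint (disjoint_left.2 fun hA hB => hcard _ hA _ hB rfl)]
  simp
end
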